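/- arXiv:2012.14143 — 5 statements merged into one kernel-verified Lean document; each statement's English description precedes it below -/
import Mathlib

section
/- Let ρ be a density matrix of full rank on a finite-dimensional Hilbert space A with minimum eigenvalue λ_min > 0, and let |ψ⟩ ∈ A ⊗ R be a purification of ρ. Then for every density matrix σ on A, every purification of σ on A ⊗ R can be written as (𝟙_A ⊗ T)|ψ⟩ for some operator T acting on R with ‖T‖_∞ ≤ 1/√λ_min. -/
/-!
With `ρ = M Mᴴ` invertible, `T := (Mᴴ ρ⁻¹ N)ᵀ` satisfies `M Tᵀ = ρ ρ⁻¹ N = N`. Everything is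
bounded in the `ℓ²` operator norm, which dominates the largest singular value and is invariant
under transposition. By the C⋆-identity, `‖Mᴴ ρ⁻¹‖² = ‖ρ⁻¹ M Mᴴ ρ⁻¹‖ = ‖ρ⁻¹‖ ≤ 1 / λ_min`, and
`‖N‖² = ‖Nᴴ N‖ ≤ Tr (Nᴴ N) = 1`; hence `‖T‖ ≤ ‖Mᴴ ρ⁻¹‖ ‖N‖ ≤ 1 / √λ_min`.
-/

open Matrix
open scoped Classical ComplexOrder

/-- The singular values of a matrix: square roots of the eigenvalues of `Xᴴ * X`. -/
noncomputable def singVals {m n : Type*} [Fintype m] [Fintype n] [DecidableEq n]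
    (X : Matrix m n ℂ) : n → ℝ :=
  fun i => Real.sqrt ((Matrix.isHermitian_conjTranspose_mul_self X).eigenvalues i)

/-- The operator norm `‖X‖_∞`, the largest singular value. -/
noncomputable def opNorm {m n : Type*} [Fintype m] [Fintype n] [DecidableEq n]
    (X : Matrix m n ℂ) : ℝ := ⨆ i, singVals X i

open scoped Matrix.Norms.L2Operator

theorem Unitary.norm_conjStarAlgAut {S E : Type*} [NormedRing E] [StarRing E] [CStarRing E]
    [SMul S E] [IsScalarTower S E E] [SMulCommClass S E E] (u : unitary E) (x : E) :
    ‖conjStarAlgAut S E u x‖ = ‖x‖ := by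
  rw [conjStarAlgAut_apply, ← Unitary.coe_star, CStarRing.norm_mul_coe_unitary,
    CStarRing.norm_coe_unitary_mul]

theorem EuclideanSpace.norm_toLp_star {𝕜 n : Type*} [RCLike 𝕜] [Fintype n] (x : n → 𝕜) :
    ‖(WithLp.toLp 2 (star x) : EuclideanSpace 𝕜 n)‖ =
      ‖(WithLp.toLp 2 x : EuclideanSpace 𝕜 n)‖ := by
  simp [EuclideanSpace.norm_eq]

namespace Matrix

variable {𝕜 m n : Type*} [RCLike 𝕜] [Fintype m] [Fintype n] [DecidableEq n]

theorem l2_opNorm_conjStarAlgAut_diagonal (U : unitaryGroup n 𝕜) (d : n → ℝ) :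
    ‖Unitary.conjStarAlgAut 𝕜 _ U (diagonal (RCLike.ofReal ∘ d))‖ = ‖d‖ := by
  rw [Unitary.norm_conjStarAlgAut, l2_opNorm_diagonal]
  simp [Pi.norm_def, Function.comp_def]

theorem IsHermitian.l2_opNorm_eq {A : Matrix n n 𝕜} (hA : A.IsHermitian) :
    ‖A‖ = ‖hA.eigenvalues‖ := by
  conv_lhs => rw [hA.spectral_theorem]
  exact l2_opNorm_conjStarAlgAut_diagonal _ _

theorem IsHermitian.l2_opNorm_inv_le {A : Matrix n n 𝕜} (hA : A.IsHermitian) {r : ℝ}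
    (hr : 0 < r) (h : ∀ i, r ≤ hA.eigenvalues i) : ‖A⁻¹‖ ≤ r⁻¹ := by
  have hinv : A⁻¹ = Unitary.conjStarAlgAut 𝕜 _ hA.eigenvectorUnitary
      (diagonal (RCLike.ofReal ∘ hA.eigenvalues⁻¹)) := by
    refine inv_eq_left_inv ?_
    conv_lhs => enter [2]; rw [hA.spectral_theorem]
    rw [← map_mul, diagonal_mul_diagonal, ← map_one (Unitary.conjStarAlgAut 𝕜 _ _),
      ← diagonal_one]
    congr 2
    funext i
    have hi : hA.eigenvalues i ≠ 0 := (hr.trans_le (h i)).ne'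
    simp [hi]
  rw [hinv, l2_opNorm_conjStarAlgAut_diagonal]
  refine pi_norm_le_iff_of_nonneg (by positivity) |>.mpr fun i => ?_
  have hi := hr.trans_le (h i)
  rw [Pi.inv_apply, norm_inv, Real.norm_of_nonneg hi.le]
  exact inv_anti₀ hr (h i)

theorem PosSemidef.l2_opNorm_le_re_trace {A : Matrix n n 𝕜} (hA : A.PosSemidef) :
    ‖A‖ ≤ RCLike.re A.trace := by
  have hnonneg := hA.eigenvalues_nonneg
  have htrace : RCLike.re A.trace = ∑ i, hA.1.eigenvalues i := by
    simp [hA.1.trace_eq_sum_eigenvalues]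
  rw [hA.1.l2_opNorm_eq, htrace]
  refine pi_norm_le_iff_of_nonneg (Finset.sum_nonneg fun j _ => hnonneg j) |>.mpr fun i => ?_
  rw [Real.norm_of_nonneg (hnonneg i)]
  exact Finset.single_le_sum (fun j _ => hnonneg j) (Finset.mem_univ i)

theorem sq_l2_opNorm_le_re_trace (A : Matrix m n 𝕜) :
    ‖A‖ ^ 2 ≤ RCLike.re (Aᴴ * A).trace := by
  rw [sq, ← l2_opNorm_conjTranspose_mul_self]
  exact (posSemidef_conjTranspose_mul_self A).l2_opNorm_le_re_trace

theorem l2_opNorm_transpose_le [DecidableEq m] (A : Matrix m n 𝕜) : ‖Aᵀ‖ ≤ ‖A‖ := by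
  rw [l2_opNorm_def]
  refine ContinuousLinearMap.opNorm_le_bound _ (norm_nonneg _) fun x => ?_
  have hstar : Aᵀ *ᵥ x.ofLp = star (Aᴴ *ᵥ star x.ofLp) := by
    rw [star_mulVec, conjTranspose_conjTranspose, star_star, mulVec_transpose]
  calc _ = ‖(WithLp.toLp 2 (Aᵀ *ᵥ x.ofLp) : EuclideanSpace 𝕜 n)‖ := rfl
    _ = ‖(WithLp.toLp 2 (Aᴴ *ᵥ star x.ofLp) : EuclideanSpace 𝕜 n)‖ := by
        rw [hstar, EuclideanSpace.norm_toLp_star]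
    _ ≤ ‖Aᴴ‖ * ‖(WithLp.toLp 2 (star x.ofLp) : EuclideanSpace 𝕜 m)‖ :=
        l2_opNorm_mulVec _ _
    _ = ‖A‖ * ‖x‖ := by
        rw [l2_opNorm_conjTranspose, EuclideanSpace.norm_toLp_star, WithLp.toLp_ofLp]

theorem l2_opNorm_transpose [DecidableEq m] (A : Matrix m n 𝕜) : ‖Aᵀ‖ = ‖A‖ :=
  (l2_opNorm_transpose_le A).antisymm (by simpa using l2_opNorm_transpose_le Aᵀ)

theorem sq_l2_opNorm_conjTranspose_mul_inv (B : Matrix n m 𝕜)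
    (h : IsUnit (B * Bᴴ).det) : ‖Bᴴ * (B * Bᴴ)⁻¹‖ ^ 2 = ‖(B * Bᴴ)⁻¹‖ := by
  rw [sq, ← l2_opNorm_conjTranspose_mul_self, conjTranspose_mul, conjTranspose_conjTranspose,
    conjTranspose_nonsing_inv, (isHermitian_mul_conjTranspose_self B).eq]
  congr 1
  calc (B * Bᴴ)⁻¹ * B * (Bᴴ * (B * Bᴴ)⁻¹)
        = (B * Bᴴ)⁻¹ * (B * Bᴴ) * (B * Bᴴ)⁻¹ := by simp only [Matrix.mul_assoc]
    _ = (B * Bᴴ)⁻¹ := by rw [nonsing_inv_mul _ h, Matrix.one_mul]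

end Matrix

theorem singVals_le_l2_opNorm {m n : Type*} [Fintype m] [Fintype n] [DecidableEq n]
    (X : Matrix m n ℂ) (i : n) : singVals X i ≤ ‖X‖ := by
  have hX := isHermitian_conjTranspose_mul_self X
  have heig : hX.eigenvalues i ≤ ‖X‖ ^ 2 :=
    calc hX.eigenvalues i ≤ ‖hX.eigenvalues‖ :=
          (Real.le_norm_self _).trans (norm_le_pi_norm _ i)
      _ = ‖X‖ ^ 2 := by rw [← hX.l2_opNorm_eq, l2_opNorm_conjTranspose_mul_self, sq]
  exact (Real.sqrt_le_sqrt heig).trans_eq (Real.sqrt_sq (norm_nonneg X))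

theorem opNorm_le_l2_opNorm {m n : Type*} [Fintype m] [Fintype n] [DecidableEq n]
    (X : Matrix m n ℂ) : opNorm X ≤ ‖X‖ :=
  Real.iSup_le (singVals_le_l2_opNorm X) (norm_nonneg X)

theorem purification_of_other_state_general {dA dR : ℕ}
    (M : Matrix (Fin dA) (Fin dR) ℂ)
    (lamMin : ℝ) (hpos : 0 < lamMin)
    (hmin : ∀ i, lamMin ≤ (Matrix.isHermitian_mul_conjTranspose_self M).eigenvalues i)
    (N : Matrix (Fin dA) (Fin dR) ℂ) (hN : (N * Nᴴ).trace = 1) :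
    ∃ T : Matrix (Fin dR) (Fin dR) ℂ,
      opNorm T ≤ 1 / Real.sqrt lamMin ∧ N = M * Tᵀ := by
  have hρ := isHermitian_mul_conjTranspose_self M
  have hdet : IsUnit (M * Mᴴ).det := (isUnit_iff_isUnit_det _).mp <|
    (hρ.posDef_iff_eigenvalues_pos.mpr fun i => hpos.trans_le (hmin i)).isUnit
  have hMinv : ‖Mᴴ * (M * Mᴴ)⁻¹‖ ≤ 1 / Real.sqrt lamMin := by
    rw [one_div, ← Real.sqrt_inv]
    refine Real.le_sqrt_of_sq_le ?_
    rw [sq_l2_opNorm_conjTranspose_mul_inv M hdet]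
    exact hρ.l2_opNorm_inv_le hpos hmin
  have hNnorm : ‖N‖ ≤ 1 := by
    refine (sq_le_one_iff₀ (norm_nonneg N)).mp ((sq_l2_opNorm_le_re_trace N).trans ?_)
    rw [trace_mul_comm, hN, RCLike.one_re]
  refine ⟨(Mᴴ * (M * Mᴴ)⁻¹ * N)ᵀ, ?_, ?_⟩
  · calc opNorm (Mᴴ * (M * Mᴴ)⁻¹ * N)ᵀ ≤ ‖Mᴴ * (M * Mᴴ)⁻¹ * N‖ :=
          (opNorm_le_l2_opNorm _).trans_eq (l2_opNorm_transpose _)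
      _ ≤ ‖Mᴴ * (M * Mᴴ)⁻¹‖ * ‖N‖ := l2_opNorm_mul _ _
      _ ≤ 1 / Real.sqrt lamMin :=
        (mul_le_mul hMinv hNnorm (norm_nonneg N) (by positivity)).trans_eq (mul_one _)
  · rw [transpose_transpose, ← Matrix.mul_assoc, ← Matrix.mul_assoc, mul_nonsing_inv _ hdet,
      Matrix.one_mul]

/-- A purification of a state on `A = Fin dA` with reference `R = Fin dR` is identified with its
coefficient matrix `M : Matrix (Fin dA) (Fin dR) ℂ`, i.e. `|ψ⟩ = ∑_{a,r} M a r |a⟩|r⟩`;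
the reduced state is then `Tr_R |ψ⟩⟨ψ| = M Mᴴ`, and `(𝟙_A ⊗ T)|ψ⟩` has coefficient
matrix `M * Tᵀ`.

**Statement.** If `ρ = M Mᴴ` is a density matrix of full rank with minimum eigenvalue
`λmin > 0`, then every purification (coefficient matrix `N`) of any density matrix
`σ = N Nᴴ` on `A` is of the form `(𝟙_A ⊗ T)|ψ⟩` for an operator `T` on `R` with
`‖T‖_∞ ≤ 1/√λmin`. -/
theorem purification_of_other_state {dA dR : ℕ}
    (M : Matrix (Fin dA) (Fin dR) ℂ) (hM : (M * Mᴴ).trace = 1)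
    (lamMin : ℝ) (hpos : 0 < lamMin)
    (hmin : ∀ i, lamMin ≤ (Matrix.isHermitian_mul_conjTranspose_self M).eigenvalues i)
    (N : Matrix (Fin dA) (Fin dR) ℂ) (hN : (N * Nᴴ).trace = 1) :
    ∃ T : Matrix (Fin dR) (Fin dR) ℂ,
      opNorm T ≤ 1 / Real.sqrt lamMin ∧ N = M * Tᵀ :=
  purification_of_other_state_general M lamMin hpos hmin N hN
end

section
/- If a density matrix ρ with spectral decomposition ρ = Σ_j p_j π_j onto rank-one projectors π_j satisfies Tr(ρΛ) ≥ 1 − ε for an operator 0 ≤ Λ ≤ 𝟙, then Σ_j p_j ‖π_j − √Λ π_j √Λ‖₁ ≤ 2√ε (Gentle Operator Lemma). -/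
open Matrix
open scoped Classical ComplexOrder

/-- The square root of a positive semidefinite matrix, as `Matrix.PosSemidef.sqrt` was defined in
the older Mathlib (it has since been removed). -/
noncomputable def Matrix.PosSemidef.sqrt {n 𝕜 : Type*} [Fintype n] [RCLike 𝕜] [DecidableEq n]
    {A : Matrix n n 𝕜} (hA : Matrix.PosSemidef A) : Matrix n n 𝕜 :=
  hA.1.eigenvectorUnitary.1 * diagonal ((↑) ∘ (√·) ∘ hA.1.eigenvalues) *
    (star hA.1.eigenvectorUnitary : Matrix n n 𝕜)

/-- The trace norm `‖X‖₁`, the sum of the singular values. -/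
noncomputable def traceNorm {m n : Type*} [Fintype m] [Fintype n] [DecidableEq n]
    (X : Matrix m n ℂ) : ℝ := ∑ i, singVals X i

/-!
For a unit vector `v` let `P = |v⟩⟨v|` and `Q = √Λ P √Λ = |√Λ v⟩⟨√Λ v|`. With
`a = ⟨v, √Λ v⟩` and `b = ⟨v, Λ v⟩` one computes `Tr (P - Q)² = 1 - 2a² + b²`. Since `0 ≤ Λ ≤ 1`
forces `√Λ ≥ Λ`, we have `a ≥ b ≥ 0`, hence `Tr (P - Q)² ≤ 1 - b² ≤ 2 (1 - b)`. As `P - Q` has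
rank at most two, Cauchy–Schwarz on its singular values gives
`‖P - Q‖₁ ≤ √(2 Tr (P - Q)²) ≤ 2 √(1 - b)`. Averaging over the eigenvectors of `ρ` with the
concavity of `√` yields the bound `2 √(1 - Tr ρΛ) ≤ 2 √ε`.
-/

namespace Matrix

section Trace

variable {n : Type*} [Fintype n]

lemma trace_vecMulVec_mul {R : Type*} [CommSemiring R] (u w : n → R) (A : Matrix n n R) :
    (vecMulVec u w * A).trace = w ⬝ᵥ (A *ᵥ u) := by
  rw [vecMulVec_mul, trace_vecMulVec, dotProduct_comm, dotProduct_mulVec]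

lemma trace_sq_vecMulVec_sub_vecMulVec (u w : n → ℂ) :
    ((vecMulVec u (star u) - vecMulVec w (star w)) *
      (vecMulVec u (star u) - vecMulVec w (star w))).trace =
      (star u ⬝ᵥ u) ^ 2 - 2 * (star u ⬝ᵥ w) * (star w ⬝ᵥ u) + (star w ⬝ᵥ w) ^ 2 := by
  simp only [sub_mul, mul_sub, vecMulVec_mul_vecMulVec, trace_sub, trace_vecMulVec,
    smul_dotProduct, smul_eq_mul, dotProduct_comm u, dotProduct_comm w]
  ring

end Trace

section Rank

variable {m n K : Type*} [Fintype n] [Field K]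

lemma rank_add_le (A B : Matrix m n K) : (A + B).rank ≤ A.rank + B.rank := by
  rw [rank, rank, rank, mulVecLin_add]
  exact (Submodule.finrank_mono (LinearMap.range_add_le _ _)).trans
    (Submodule.finrank_add_le_finrank_add_finrank _ _)

lemma rank_vecMulVec_sub_vecMulVec_le [Fintype m] (u u' : m → K) (w w' : n → K) :
    (vecMulVec u w - vecMulVec u' w').rank ≤ 2 := by
  rw [sub_eq_add_neg, ← neg_vecMulVec]
  exact (rank_add_le _ _).trans (add_le_add (rank_vecMulVec_le _ _) (rank_vecMulVec_le _ _))

end Rank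

section Sqrt

variable {n : Type*} [Fintype n] [DecidableEq n]

lemma PosSemidef.re_dotProduct_mulVec_le_one {A : Matrix n n ℂ} (hA1 : (1 - A).PosSemidef)
    {v : n → ℂ} (hv : star v ⬝ᵥ v = 1) : (star v ⬝ᵥ (A *ᵥ v)).re ≤ 1 := by
  have h := hA1.dotProduct_mulVec_nonneg v
  rw [sub_mulVec, one_mulVec, dotProduct_sub, hv, sub_nonneg] at h
  simpa using Complex.re_le_re h

lemma IsHermitian.eigenvalues_le_one {A : Matrix n n ℂ} (hA : A.IsHermitian)
    (hA1 : (1 - A).PosSemidef) (i : n) : hA.eigenvalues i ≤ 1 := by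
  have hunit : star ⇑(hA.eigenvectorBasis i) ⬝ᵥ ⇑(hA.eigenvectorBasis i) = 1 := by
    rw [dotProduct_comm, ← EuclideanSpace.inner_eq_star_dotProduct,
      inner_self_eq_norm_sq_to_K, hA.eigenvectorBasis.orthonormal.1 i]
    norm_num
  rw [hA.eigenvalues_eq]
  exact hA1.re_dotProduct_mulVec_le_one hunit

lemma PosSemidef.sqrt_eq {A : Matrix n n ℂ} (hA : A.PosSemidef) :
    hA.sqrt = (hA.1.eigenvectorUnitary : Matrix n n ℂ) *
      diagonal (fun i => (√(hA.1.eigenvalues i) : ℂ)) *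
        star (hA.1.eigenvectorUnitary : Matrix n n ℂ) :=
  rfl

lemma PosSemidef.posSemidef_sqrt {A : Matrix n n ℂ} (hA : A.PosSemidef) :
    hA.sqrt.PosSemidef :=
  (posSemidef_diagonal_iff.mpr fun _ => Complex.zero_le_real.mpr (Real.sqrt_nonneg _))
    |>.mul_mul_conjTranspose_same _

lemma PosSemidef.sqrt_mul_sqrt {A : Matrix n n ℂ} (hA : A.PosSemidef) :
    hA.sqrt * hA.sqrt = A := by
  set U : Matrix n n ℂ := (hA.1.eigenvectorUnitary : Matrix n n ℂ)
  have hUU : star U * U = 1 := Unitary.coe_star_mul_self _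
  calc hA.sqrt * hA.sqrt
      = U * (diagonal (fun i => (√(hA.1.eigenvalues i) : ℂ)) * (star U * U) *
          diagonal (fun i => (√(hA.1.eigenvalues i) : ℂ))) * star U := by
        simp only [hA.sqrt_eq, U, mul_assoc]
    _ = U * diagonal ((↑) ∘ hA.1.eigenvalues) * star U := by
        rw [hUU, mul_one, diagonal_mul_diagonal]
        congr 3 with i
        simp [← Complex.ofReal_mul, Real.mul_self_sqrt (hA.eigenvalues_nonneg i)]
    _ = A := hA.1.spectral_theorem.symm

/-- `√x ≥ x` on `[0, 1]`, applied to the eigenvalues. -/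
lemma PosSemidef.posSemidef_sqrt_sub {A : Matrix n n ℂ} (hA : A.PosSemidef)
    (hA1 : (1 - A).PosSemidef) : (hA.sqrt - A).PosSemidef := by
  set U : Matrix n n ℂ := (hA.1.eigenvectorUnitary : Matrix n n ℂ)
  have hdiff : hA.sqrt - A =
      U * diagonal (fun i => ((√(hA.1.eigenvalues i) - hA.1.eigenvalues i : ℝ) : ℂ)) * Uᴴ := by
    calc hA.sqrt - A
        = U * diagonal (fun i => (√(hA.1.eigenvalues i) : ℂ)) * star U -
            U * diagonal ((↑) ∘ hA.1.eigenvalues) * star U := by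
          rw [hA.sqrt_eq]
          congr 1
          exact hA.1.spectral_theorem
      _ = _ := by
          rw [← star_eq_conjTranspose, ← sub_mul, ← mul_sub, diagonal_sub]
          congr 3 with i
          simp
  rw [hdiff]
  refine (posSemidef_diagonal_iff.mpr fun i => ?_).mul_mul_conjTranspose_same _
  have h0 := hA.eigenvalues_nonneg i
  have h1 := hA.1.eigenvalues_le_one hA1 i
  rw [Complex.zero_le_real, sub_nonneg]
  exact Real.le_sqrt_of_sq_le (by nlinarith)

end Sqrt

end Matrix

theorem Real.sum_mul_sqrt_le_sqrt_sum_mul {ι : Type*} (s : Finset ι) {p e : ι → ℝ}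
    (hp : ∀ i ∈ s, 0 ≤ p i) (hp1 : ∑ i ∈ s, p i = 1) (he : ∀ i ∈ s, 0 ≤ e i) :
    ∑ i ∈ s, p i * √(e i) ≤ √(∑ i ∈ s, p i * e i) :=
  Real.strictConcaveOn_sqrt.concaveOn.le_map_sum hp hp1 he

lemma traceNorm_le_sqrt_mul_trace {m n : Type*} [Fintype m] [Fintype n] [DecidableEq n]
    {X : Matrix m n ℂ} {r : ℕ} (hr : X.rank ≤ r) :
    traceNorm X ≤ √(r * (Xᴴ * X).trace.re) := by
  have hH := isHermitian_conjTranspose_mul_self X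
  have hμ := (posSemidef_conjTranspose_mul_self X).eigenvalues_nonneg
  set s := Finset.univ.filter fun i => singVals X i ≠ 0
  have hs : s.card ≤ r := by
    have hrank := hH.rank_eq_card_non_zero_eigs
    rw [rank_conjTranspose_mul_self] at hrank
    calc s.card = Fintype.card {i // hH.eigenvalues i ≠ 0} := by
          rw [Fintype.card_subtype]
          congr 1 with i
          simp [s, singVals, Real.sqrt_eq_zero', (hμ i).lt_iff_ne']
      _ ≤ r := hrank ▸ hr
  have htr : (Xᴴ * X).trace.re = ∑ i, singVals X i ^ 2 := by
    simp [hH.trace_eq_sum_eigenvalues, singVals, Real.sq_sqrt (hμ _)]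
  refine Real.le_sqrt_of_sq_le ?_
  calc traceNorm X ^ 2 = (∑ i ∈ s, singVals X i) ^ 2 := by
        rw [traceNorm, Finset.sum_filter_ne_zero]
    _ ≤ s.card * ∑ i ∈ s, singVals X i ^ 2 := sq_sum_le_card_mul_sum_sq
    _ ≤ r * ∑ i, singVals X i ^ 2 := by
        gcongr
        exact Finset.subset_univ s
    _ = r * (Xᴴ * X).trace.re := by rw [htr]

theorem traceNorm_vecMulVec_sub_sqrt_conj_le {n : Type*} [Fintype n] [DecidableEq n]
    {Λ : Matrix n n ℂ} (hΛ : Λ.PosSemidef) (hΛ1 : (1 - Λ).PosSemidef) {v : n → ℂ}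
    (hv : star v ⬝ᵥ v = 1) :
    traceNorm (vecMulVec v (star v) - hΛ.sqrt * vecMulVec v (star v) * hΛ.sqrt) ≤
      2 * √(1 - (star v ⬝ᵥ (Λ *ᵥ v)).re) := by
  set B := hΛ.sqrt
  have hB : B.PosSemidef := hΛ.posSemidef_sqrt
  obtain ⟨a, ha⟩ : ∃ a : ℝ, star v ⬝ᵥ (B *ᵥ v) = a :=
    ⟨_, Complex.eq_re_of_ofReal_le (r := 0) (by simpa using hB.dotProduct_mulVec_nonneg v)⟩
  obtain ⟨b, hb⟩ : ∃ b : ℝ, star v ⬝ᵥ (Λ *ᵥ v) = b :=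
    ⟨_, Complex.eq_re_of_ofReal_le (r := 0) (by simpa using hΛ.dotProduct_mulVec_nonneg v)⟩
  have hb0 : 0 ≤ b := Complex.zero_le_real.mp (hb ▸ hΛ.dotProduct_mulVec_nonneg v)
  have hb1 : b ≤ 1 := by simpa [hb] using hΛ1.re_dotProduct_mulVec_le_one hv
  have hba : b ≤ a := by
    have h := (hΛ.posSemidef_sqrt_sub hΛ1).dotProduct_mulVec_nonneg v
    rwa [sub_mulVec, dotProduct_sub, ha, hb, sub_nonneg, Complex.real_le_real] at h
  have hconj : B * vecMulVec v (star v) * B = vecMulVec (B *ᵥ v) (star (B *ᵥ v)) := by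
    rw [mul_vecMulVec, vecMulVec_mul, star_mulVec, hB.1.eq]
  have htr : ((vecMulVec v (star v) - B * vecMulVec v (star v) * B)ᴴ *
      (vecMulVec v (star v) - B * vecMulVec v (star v) * B)).trace.re =
      1 - 2 * a ^ 2 + b ^ 2 := by
    have hBvv : star (B *ᵥ v) ⬝ᵥ v = a := by
      rw [star_mulVec, hB.1.eq, ← dotProduct_mulVec, ha]
    have hBvBv : star (B *ᵥ v) ⬝ᵥ (B *ᵥ v) = b := by
      rw [star_mulVec, hB.1.eq, ← dotProduct_mulVec, mulVec_mulVec, hΛ.sqrt_mul_sqrt, hb]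
    rw [hconj, conjTranspose_sub, conjTranspose_vecMulVec, conjTranspose_vecMulVec, star_star,
      star_star, trace_sq_vecMulVec_sub_vecMulVec, hv, hBvv, hBvBv, ha]
    norm_cast
    ring
  have hrank := rank_vecMulVec_sub_vecMulVec_le v (B *ᵥ v) (star v) (star (B *ᵥ v))
  rw [← hconj] at hrank
  rw [hb, Complex.ofReal_re]
  calc _ ≤ √((2 : ℕ) * (1 - 2 * a ^ 2 + b ^ 2)) := htr ▸ traceNorm_le_sqrt_mul_trace hrank
    _ ≤ √(2 ^ 2 * (1 - b)) := by
        refine Real.sqrt_le_sqrt ?_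
        push_cast
        nlinarith
    _ = 2 * √(1 - b) := by rw [Real.sqrt_mul (by norm_num), Real.sqrt_sq (by norm_num)]

theorem gentle_operator_general {d : ℕ} (p : Fin d → ℝ) (v : Fin d → (Fin d → ℂ))
    (hp : ∀ j, 0 ≤ p j) (hp1 : ∑ j, p j = 1)
    (hortho : ∀ i j, star (v i) ⬝ᵥ v j = if i = j then 1 else 0)
    (π : Fin d → Matrix (Fin d) (Fin d) ℂ)
    (hπ : ∀ j, π j = Matrix.vecMulVec (v j) (star (v j)))
    (ρ : Matrix (Fin d) (Fin d) ℂ) (hρ : ρ = ∑ j, (p j : ℂ) • π j)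
    (Λ : Matrix (Fin d) (Fin d) ℂ) (hΛ : Λ.PosSemidef) (hΛ1 : (1 - Λ).PosSemidef)
    (ε : ℝ) (htr : 1 - ε ≤ ((ρ * Λ).trace).re) :
    ∑ j, p j * traceNorm (π j - hΛ.sqrt * π j * hΛ.sqrt) ≤ 2 * Real.sqrt ε := by
  obtain rfl : π = fun j => vecMulVec (v j) (star (v j)) := funext hπ
  have hv : ∀ j, star (v j) ⬝ᵥ v j = 1 := fun j => by simpa using hortho j j
  set e : Fin d → ℝ := fun j => 1 - (star (v j) ⬝ᵥ (Λ *ᵥ v j)).re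
  have he : ∀ j, 0 ≤ e j := fun j => sub_nonneg.mpr (hΛ1.re_dotProduct_mulVec_le_one (hv j))
  have hpe : ∑ j, p j * e j ≤ ε := by
    have htrace : ((ρ * Λ).trace).re = ∑ j, p j * (star (v j) ⬝ᵥ (Λ *ᵥ v j)).re := by
      simp [hρ, Finset.sum_mul, trace_sum, trace_vecMulVec_mul]
    simp only [e, mul_sub, mul_one, Finset.sum_sub_distrib, hp1]
    linarith
  calc ∑ j, p j * traceNorm (vecMulVec (v j) (star (v j)) -
          hΛ.sqrt * vecMulVec (v j) (star (v j)) * hΛ.sqrt)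
      ≤ ∑ j, p j * (2 * √(e j)) := Finset.sum_le_sum fun j _ =>
        mul_le_mul_of_nonneg_left (traceNorm_vecMulVec_sub_sqrt_conj_le hΛ hΛ1 (hv j)) (hp j)
    _ = 2 * ∑ j, p j * √(e j) := by simp only [Finset.mul_sum, mul_left_comm]
    _ ≤ 2 * √(∑ j, p j * e j) := by
        gcongr
        exact Real.sum_mul_sqrt_le_sqrt_sum_mul _ (fun j _ => hp j) hp1 fun j _ => he j
    _ ≤ 2 * √ε := by gcongr

/-- **Gentle Operator Lemma.** If a density matrix `ρ = ∑ j p j • π j` (spectral decomposition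
into rank-one projectors `π j = |v j⟩⟨v j|` onto an orthonormal basis) satisfies
`Tr(ρ Λ) ≥ 1 - ε` for an operator `0 ≤ Λ ≤ 𝟙`, then
`∑ j p j ‖π j - √Λ π j √Λ‖₁ ≤ 2 √ε`. -/
theorem gentle_operator {d : ℕ} (p : Fin d → ℝ) (v : Fin d → (Fin d → ℂ))
    (hp : ∀ j, 0 ≤ p j) (hp1 : ∑ j, p j = 1)
    (hortho : ∀ i j, star (v i) ⬝ᵥ v j = if i = j then 1 else 0)
    (π : Fin d → Matrix (Fin d) (Fin d) ℂ)
    (hπ : ∀ j, π j = Matrix.vecMulVec (v j) (star (v j)))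
    (ρ : Matrix (Fin d) (Fin d) ℂ) (hρ : ρ = ∑ j, (p j : ℂ) • π j)
    (Λ : Matrix (Fin d) (Fin d) ℂ) (hΛ : Λ.PosSemidef) (hΛ1 : (1 - Λ).PosSemidef)
    (ε : ℝ) (hε : 0 ≤ ε) (htr : 1 - ε ≤ ((ρ * Λ).trace).re) :
    ∑ j, p j * traceNorm (π j - hΛ.sqrt * π j * hΛ.sqrt) ≤ 2 * Real.sqrt ε :=
  gentle_operator_general p v hp hp1 hortho π hπ ρ hρ Λ hΛ hΛ1 ε htr
end

section
/- Every density matrix ρ on a d-dimensional Hilbert space can be written, for any n ≥ d, as a uniform convex combination of n pure states: ρ = (1/n) Σ_{i=1}^n |ψ_i⟩⟨ψ_i|. -/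
/-!
Diagonalise `ρ = U Λ Uᴴ` and put `B = U √Λ`, so that `ρ = B Bᴴ` while `Bᴴ B = Λ` is diagonal.
For a primitive `n`-th root of unity `ζ`, the vectors `f k = (ζ ^ (k j))_{j < d}`, `k < n`, have
unimodular entries and, because `d ≤ n`, satisfy `∑ k, f k (f k)ᴴ = n • 1` by orthogonality of
characters. Hence `ψ k = B f k` gives `∑ k, ψ k (ψ k)ᴴ = n • ρ`, and
`(ψ k)ᴴ ψ k = (f k)ᴴ Λ (f k) = tr Λ = tr ρ = 1`.
-/

open Matrix
open scoped Classical ComplexOrder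

namespace IsPrimitiveRoot

theorem sum_pow_mul_inv_pow {K : Type*} [Field K] {ζ : K} {n : ℕ} (hζ : IsPrimitiveRoot ζ n)
    {i j : ℕ} (hi : i < n) (hj : j < n) :
    ∑ k ∈ Finset.range n, ζ ^ (k * i) * (ζ ^ (k * j))⁻¹ = if i = j then (n : K) else 0 := by
  have hζ0 : ζ ≠ 0 := hζ.ne_zero (by omega)
  have hpow : ∀ k, ζ ^ (k * i) * (ζ ^ (k * j))⁻¹ = (ζ ^ i * (ζ ^ j)⁻¹) ^ k := fun k => by
    rw [mul_pow, inv_pow, ← pow_mul, ← pow_mul, mul_comm i, mul_comm j]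
  simp_rw [hpow]
  split_ifs with hij
  · simp [hij, hζ0]
  · have hne : ζ ^ i * (ζ ^ j)⁻¹ ≠ 1 := fun h =>
      hij (hζ.pow_inj hi hj ((mul_inv_eq_one₀ (pow_ne_zero _ hζ0)).mp h))
    rw [geom_sum_eq hne, ← hpow, pow_mul, pow_mul, hζ.pow_eq_one, one_pow, one_pow, inv_one,
      mul_one, sub_self, zero_div]

theorem star_pow_eq_inv {ζ : ℂ} {n : ℕ} (hζ : IsPrimitiveRoot ζ n) (hn : n ≠ 0) (m : ℕ) :
    star (ζ ^ m) = (ζ ^ m)⁻¹ :=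
  (Complex.inv_eq_conj (by rw [norm_pow, hζ.norm'_eq_one hn, one_pow])).symm

theorem sum_pow_mul_conj_pow {ζ : ℂ} {n : ℕ} (hζ : IsPrimitiveRoot ζ n) {i j : ℕ} (hi : i < n)
    (hj : j < n) :
    ∑ k : Fin n, ζ ^ ((k : ℕ) * i) * star (ζ ^ ((k : ℕ) * j)) = if i = j then (n : ℂ) else 0 := by
  simp_rw [hζ.star_pow_eq_inv (by omega)]
  rw [Fin.sum_univ_eq_sum_range (fun k => ζ ^ (k * i) * (ζ ^ (k * j))⁻¹),
    hζ.sum_pow_mul_inv_pow hi hj]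

end IsPrimitiveRoot

def fourierVec (ζ : ℂ) (d k : ℕ) : Fin d → ℂ := fun j => ζ ^ (k * (j : ℕ))

theorem star_fourierVec_mul_self {ζ : ℂ} {n : ℕ} (hζ : IsPrimitiveRoot ζ n) (hn : n ≠ 0)
    (d k : ℕ) (j : Fin d) : star (fourierVec ζ d k j) * fourierVec ζ d k j = 1 := by
  rw [fourierVec, hζ.star_pow_eq_inv hn, inv_mul_cancel₀ (pow_ne_zero _ (hζ.ne_zero hn))]

theorem sum_vecMulVec_fourierVec {ζ : ℂ} {n d : ℕ} (hζ : IsPrimitiveRoot ζ n) (hdn : d ≤ n) :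
    ∑ k : Fin n, vecMulVec (fourierVec ζ d k) (star (fourierVec ζ d k)) = (n : ℂ) • 1 := by
  ext i j
  simp only [Matrix.sum_apply, vecMulVec_apply, Pi.star_apply, fourierVec, Matrix.smul_apply,
    one_apply]
  rw [hζ.sum_pow_mul_conj_pow (by omega) (by omega)]
  simp [Fin.val_inj]

namespace Matrix

variable {m n α : Type*} [Fintype n]

theorem vecMulVec_mulVec_star [CommSemiring α] [StarRing α] (A : Matrix m n α) (v : n → α) :
    vecMulVec (A *ᵥ v) (star (A *ᵥ v)) = A * vecMulVec v (star v) * Aᴴ := by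
  rw [mul_vecMulVec, vecMulVec_mul, star_mulVec]

theorem star_mulVec_dotProduct_mulVec [Fintype m] [CommSemiring α] [StarRing α]
    (A : Matrix m n α) (v : n → α) :
    star (A *ᵥ v) ⬝ᵥ (A *ᵥ v) = star v ⬝ᵥ ((Aᴴ * A) *ᵥ v) := by
  rw [star_mulVec, ← dotProduct_mulVec, mulVec_mulVec]

theorem IsDiag.star_dotProduct_mulVec_eq_trace [CommSemiring α] [StarRing α] {M : Matrix n n α}
    (hM : M.IsDiag) {v : n → α} (hv : ∀ j, star (v j) * v j = 1) :
    star v ⬝ᵥ (M *ᵥ v) = M.trace := by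
  conv_lhs => rw [← hM.diagonal_diag]
  simp only [dotProduct, mulVec_diagonal, Pi.star_apply, trace]
  exact Finset.sum_congr rfl fun j _ => by rw [mul_left_comm, hv, mul_one]

theorem PosSemidef.exists_eq_mul_conjTranspose_isDiag {𝕜 : Type*} [RCLike 𝕜] [DecidableEq n]
    {A : Matrix n n 𝕜} (hA : A.PosSemidef) : ∃ B : Matrix n n 𝕜, A = B * Bᴴ ∧ (Bᴴ * B).IsDiag := by
  set U : Matrix n n 𝕜 := ↑hA.isHermitian.eigenvectorUnitary
  set S : Matrix n n 𝕜 := diagonal fun j => (√(hA.isHermitian.eigenvalues j) : 𝕜)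
  have hS : Sᴴ = S := by simp [S, diagonal_conjTranspose]
  have hUU : Uᴴ * U = 1 := Unitary.coe_star_mul_self _
  refine ⟨U * S, ?_, ?_⟩
  · have hSS : S * Sᴴ = diagonal (RCLike.ofReal ∘ hA.isHermitian.eigenvalues) := by
      rw [hS, diagonal_mul_diagonal]
      congr! with j
      rw [Function.comp_apply, ← RCLike.ofReal_mul, Real.mul_self_sqrt (hA.eigenvalues_nonneg j)]
    rw [conjTranspose_mul, ← mul_assoc, mul_assoc U, hSS]
    exact hA.isHermitian.spectral_theorem
  · rw [conjTranspose_mul, hS, mul_assoc, ← mul_assoc Uᴴ, hUU, one_mul, diagonal_mul_diagonal]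
    exact isDiag_diagonal _

end Matrix

/-- Every density matrix `ρ` on `ℂ^d` can be written, for any `n ≥ d`, as a uniform
convex combination of `n` pure states: `ρ = (1/n) ∑_{i=1}^n |ψ i⟩⟨ψ i|`. -/
theorem density_eq_uniform_mixture_of_pure {d : ℕ} (ρ : Matrix (Fin d) (Fin d) ℂ)
    (hρ : ρ.PosSemidef) (htr : ρ.trace = 1) (n : ℕ) (hn : d ≤ n) :
    ∃ ψ : Fin n → (Fin d → ℂ),
      (∀ i, star (ψ i) ⬝ᵥ ψ i = 1) ∧
      ρ = ((n : ℂ))⁻¹ • ∑ i, Matrix.vecMulVec (ψ i) (star (ψ i)) := by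
  obtain ⟨B, rfl, hBdiag⟩ := hρ.exists_eq_mul_conjTranspose_isDiag
  have hn0 : n ≠ 0 := by
    rintro rfl
    obtain rfl : d = 0 := Nat.le_zero.mp hn
    simp at htr
  obtain ⟨ζ, hζ⟩ : ∃ ζ : ℂ, IsPrimitiveRoot ζ n := ⟨_, Complex.isPrimitiveRoot_exp n hn0⟩
  refine ⟨fun k => B *ᵥ fourierVec ζ d k, fun k => ?_, ?_⟩
  · rw [star_mulVec_dotProduct_mulVec,
      hBdiag.star_dotProduct_mulVec_eq_trace (star_fourierVec_mul_self hζ hn0 d k),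
      trace_mul_comm, htr]
  · simp_rw [vecMulVec_mulVec_star, ← Finset.sum_mul, ← Finset.mul_sum,
      sum_vecMulVec_fourierVec hζ hn, Matrix.mul_smul, mul_one, smul_mul]
    rw [inv_smul_smul₀ (Nat.cast_ne_zero.mpr hn0)]
end

section
/- Given unit vector |ξ⟩ in a bipartite Hilbert space H_A ⊗ H_B with Schmidt coefficients λ(i), the squared fidelity between |ξ⟩⟨ξ| and the product of its marginals satisfies F(|ξ⟩⟨ξ|, ξ_A ⊗ ξ_B)² = Σ_i λ(i)³ ≥ ‖ξ_A‖_∞³, where ξ_A, ξ_B are the reduced states and ‖ξ_A‖_∞ is the largest eigenvalue of ξ_A. -/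
open Matrix
open scoped Classical ComplexOrder

open scoped Kronecker

/-!
Orthonormality makes each Schmidt vector `v i` an eigenvector of `ξ_A` with eigenvalue `λ i`, and
likewise `w i` for `ξ_B`, so `ξ_A ⊗ ξ_B` scales the product vector `v i ⊗ w i` by `λ i ^ 2`.
These product vectors are again orthonormal, hence
`⟨ξ| ξ_A ⊗ ξ_B |ξ⟩ = ∑ i, √(λ i) * λ i ^ 2 * √(λ i) = ∑ i, λ i ^ 3`,
and the largest eigenvalue cubed is a single term of this sum.
-/

section

variable {R ι m n : Type*} [CommSemiring R] [Fintype m] [Fintype n]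

theorem kronecker_mulVec_prod (A : Matrix m m R) (B : Matrix n n R) (x : m → R) (y : n → R) :
    (A ⊗ₖ B) *ᵥ (fun p => x p.1 * y p.2) = fun p => (A *ᵥ x) p.1 * (B *ᵥ y) p.2 := by
  ext p
  simp only [mulVec, dotProduct, kroneckerMap_apply, Fintype.sum_prod_type, Finset.sum_mul_sum]
  refine Finset.sum_congr rfl fun a _ => Finset.sum_congr rfl fun b _ => ?_
  ring

variable [StarRing R]

theorem sum_smul_vecMulVec_star_mulVec_of_orthonormal [Fintype ι] [DecidableEq ι]
    {v : ι → n → R} (hv : ∀ i j, star (v i) ⬝ᵥ v j = if i = j then 1 else 0)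
    (c : ι → R) (l : ι) :
    (∑ i, c i • vecMulVec (v i) (star (v i))) *ᵥ v l = c l • v l := by
  simp [sum_mulVec, smul_mulVec, vecMulVec_mulVec, hv, ite_smul]

theorem star_sum_smul_dotProduct_sum_smul_of_orthonormal [Fintype ι] [DecidableEq ι]
    {u : ι → n → R} (hu : ∀ i j, star (u i) ⬝ᵥ u j = if i = j then 1 else 0)
    (c d : ι → R) :
    star (∑ i, c i • u i) ⬝ᵥ ∑ i, d i • u i = ∑ i, star (c i) * d i := by
  simp [star_sum, sum_dotProduct, dotProduct_sum, smul_dotProduct, dotProduct_smul, hu, mul_comm]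

theorem star_prod_dotProduct_prod (x x' : m → R) (y y' : n → R) :
    star (fun p : m × n => x p.1 * y p.2) ⬝ᵥ (fun p => x' p.1 * y' p.2) =
      (star x ⬝ᵥ x') * (star y ⬝ᵥ y') := by
  simp only [dotProduct, Pi.star_apply, star_mul', Fintype.sum_prod_type, Finset.sum_mul_sum]
  refine Finset.sum_congr rfl fun a _ => Finset.sum_congr rfl fun b _ => ?_
  ring

theorem orthonormal_prod [DecidableEq ι] {v : ι → m → R} {w : ι → n → R}
    (hv : ∀ i j, star (v i) ⬝ᵥ v j = if i = j then 1 else 0)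
    (hw : ∀ i j, star (w i) ⬝ᵥ w j = if i = j then 1 else 0) (i j : ι) :
    star (fun p : m × n => v i p.1 * w i p.2) ⬝ᵥ (fun p => v j p.1 * w j p.2) =
      if i = j then 1 else 0 := by
  rw [star_prod_dotProduct_prod, hv, hw]
  split_ifs <;> simp

end

theorem iSup_pow_le_sum_pow {ι : Type*} [Fintype ι] {f : ι → ℝ} (hf : ∀ i, 0 ≤ f i)
    {n : ℕ} (hn : n ≠ 0) : (⨆ i, f i) ^ n ≤ ∑ i, f i ^ n := by
  cases isEmpty_or_nonempty ι
  · simp [hn] -- `⨆` over an empty type is `0` in `ℝ`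
  obtain ⟨i₀, hi₀⟩ := Finite.exists_max f
  rw [le_antisymm (ciSup_le hi₀) (le_ciSup (Finite.bddAbove_range f) i₀)]
  exact Finset.single_le_sum (fun i _ => pow_nonneg (hf i) n) (Finset.mem_univ i₀)

theorem pure_product_fidelity_schmidt_general {dA dB m : ℕ}
    (lam : Fin m → ℝ) (hlam0 : ∀ i, 0 ≤ lam i)
    (v : Fin m → (Fin dA → ℂ)) (w : Fin m → (Fin dB → ℂ))
    (hv : ∀ i j, star (v i) ⬝ᵥ v j = if i = j then 1 else 0)
    (hw : ∀ i j, star (w i) ⬝ᵥ w j = if i = j then 1 else 0)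
    (ξ : Fin dA × Fin dB → ℂ)
    (hξ : ξ = fun ab => ∑ i, (Real.sqrt (lam i) : ℂ) * v i ab.1 * w i ab.2)
    (ξA : Matrix (Fin dA) (Fin dA) ℂ)
    (hξA : ξA = ∑ i, (lam i : ℂ) • Matrix.vecMulVec (v i) (star (v i)))
    (ξB : Matrix (Fin dB) (Fin dB) ℂ)
    (hξB : ξB = ∑ i, (lam i : ℂ) • Matrix.vecMulVec (w i) (star (w i)))
    (σ : Matrix (Fin dA × Fin dB) (Fin dA × Fin dB) ℂ)
    (hσ : σ = Matrix.of fun p q => ξA p.1 q.1 * ξB p.2 q.2) :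
    (star ξ ⬝ᵥ (σ *ᵥ ξ)).re = ∑ i, (lam i) ^ 3 ∧
      (⨆ i, lam i) ^ 3 ≤ ∑ i, (lam i) ^ 3 := by
  refine ⟨?_, iSup_pow_le_sum_pow hlam0 three_ne_zero⟩
  set u : Fin m → Fin dA × Fin dB → ℂ := fun i p => v i p.1 * w i p.2
  have hξu : ξ = ∑ i, (Real.sqrt (lam i) : ℂ) • u i := by
    ext p
    simp [hξ, u, Finset.sum_apply, mul_assoc]
  have hσu (i : Fin m) : σ *ᵥ u i = ((lam i : ℂ) * lam i) • u i := by
    have hσ' : σ = ξA ⊗ₖ ξB := hσ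
    rw [hσ', kronecker_mulVec_prod, hξA, hξB, sum_smul_vecMulVec_star_mulVec_of_orthonormal hv,
      sum_smul_vecMulVec_star_mulVec_of_orthonormal hw]
    ext p
    simp only [Pi.smul_apply, smul_eq_mul, u]
    ring
  have hσξ : σ *ᵥ ξ = ∑ i, ((Real.sqrt (lam i) : ℂ) * (lam i * lam i)) • u i := by
    rw [hξu, mulVec_sum]
    simp only [mulVec_smul, hσu, smul_smul]
  have hcube (i : Fin m) :
      star (Real.sqrt (lam i) : ℂ) * ((Real.sqrt (lam i) : ℂ) * (lam i * lam i)) =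
        (lam i ^ 3 : ℝ) := by
    rw [Complex.star_def, Complex.conj_ofReal, ← mul_assoc, ← Complex.ofReal_mul,
      Real.mul_self_sqrt (hlam0 i)]
    push_cast
    ring
  rw [hσξ, hξu, star_sum_smul_dotProduct_sum_smul_of_orthonormal (orthonormal_prod hv hw)]
  simp only [hcube, ← Complex.ofReal_sum, Complex.ofReal_re]

/-- Given a unit vector `|ξ⟩ = ∑ i √(λ i) |v i⟩|w i⟩` in a bipartite Hilbert space
(a Schmidt decomposition, with `v`, `w` orthonormal families and Schmidt coefficients
`λ i ≥ 0` summing to `1`), the squared fidelity between `|ξ⟩⟨ξ|` and the tensor product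
`ξ_A ⊗ ξ_B` of its marginals — which for a pure state equals `⟨ξ| ξ_A ⊗ ξ_B |ξ⟩` —
equals `∑ i (λ i)³`, and is at least `‖ξ_A‖_∞³`, the cube of the largest eigenvalue
`⨆ i, λ i` of the reduced state `ξ_A = ∑ i λ i |v i⟩⟨v i|`. -/
theorem pure_product_fidelity_schmidt {dA dB m : ℕ} (hm : 0 < m)
    (lam : Fin m → ℝ) (hlam0 : ∀ i, 0 ≤ lam i) (hlam1 : ∑ i, lam i = 1)
    (v : Fin m → (Fin dA → ℂ)) (w : Fin m → (Fin dB → ℂ))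
    (hv : ∀ i j, star (v i) ⬝ᵥ v j = if i = j then 1 else 0)
    (hw : ∀ i j, star (w i) ⬝ᵥ w j = if i = j then 1 else 0)
    (ξ : Fin dA × Fin dB → ℂ)
    (hξ : ξ = fun ab => ∑ i, (Real.sqrt (lam i) : ℂ) * v i ab.1 * w i ab.2)
    (ξA : Matrix (Fin dA) (Fin dA) ℂ)
    (hξA : ξA = ∑ i, (lam i : ℂ) • Matrix.vecMulVec (v i) (star (v i)))
    (ξB : Matrix (Fin dB) (Fin dB) ℂ)
    (hξB : ξB = ∑ i, (lam i : ℂ) • Matrix.vecMulVec (w i) (star (w i)))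
    (σ : Matrix (Fin dA × Fin dB) (Fin dA × Fin dB) ℂ)
    (hσ : σ = Matrix.of fun p q => ξA p.1 q.1 * ξB p.2 q.2) :
    (star ξ ⬝ᵥ (σ *ᵥ ξ)).re = ∑ i, (lam i) ^ 3 ∧
      (⨆ i, lam i) ^ 3 ≤ ∑ i, (lam i) ^ 3 :=
  pure_product_fidelity_schmidt_general lam hlam0 v w hv hw ξ hξ ξA hξA ξB hξB σ hσ
end

section
/- If a unitary U on H^{⊗n} ⊗ K transforms ρ^n ⊗ ω' into σ^n ⊗ ω up to trace-norm error vanishing in n, commutes asymptotically with the total charges (‖[U, A_j^{(n)}]‖_∞ = o(n)), and dim K = 2^{o(n)} with trivial ancilla charges, then the per-copy charge expectations converge: (1/n)|Tr(ρ^n A_j^{(n)}) − Tr(σ^n A_j^{(n)})| → 0 for each j. -/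
open Matrix Kronecker Filter
open scoped Classical ComplexOrder Topology

/-- The total charge `A^{(n)} = ∑ i 𝟙^{⊗(i-1)} ⊗ A ⊗ 𝟙^{⊗(n-i)}` of `n` non-interacting
copies of a `d`-dimensional system, on the Hilbert space indexed by `Fin n → Fin d`. -/
noncomputable def liftCharge {d : ℕ} (A : Matrix (Fin d) (Fin d) ℂ) (n : ℕ) :
    Matrix (Fin n → Fin d) (Fin n → Fin d) ℂ :=
  ∑ i : Fin n, Matrix.of fun x y =>
    if ∀ k, k ≠ i → x k = y k then A (x i) (y i) else 0

/-!
Write `N = A^{(n)}` and `B = N ⊗ 𝟙` for the charge on system and ancilla. Conjugating by the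
unitary `U` changes `B` only by `U† [U, B]`, so

`Tr(ρ N) - Tr(σ N) = Tr(U† [U, B] (ρ ⊗ ω')) + Tr(B (U (ρ ⊗ ω') U† - σ ⊗ ω))`.

By Hölder's inequality the first term is at most `‖[U, B]‖_∞ = o(n)`, and the second at most
`‖B‖_∞ ‖U (ρ ⊗ ω') U† - σ ⊗ ω‖₁ ≤ n ‖A‖_∞ · o(1)`. Dividing by `n` gives the claim.
-/

open scoped Matrix.Norms.L2Operator InnerProductSpace

section SingularValues

variable {m n : Type*} [Fintype m] [Fintype n] [DecidableEq n]

/-- The right-hand side is the sup norm on `n → ℂ`, i.e. the largest `|λᵢ|`. -/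
lemma Matrix.IsHermitian.l2_opNorm_eq_norm_eigenvalues {H : Matrix n n ℂ} (hH : H.IsHermitian) :
    ‖H‖ = ‖(RCLike.ofReal ∘ hH.eigenvalues : n → ℂ)‖ := by
  have hC := hH.eigenvectorUnitary.2
  conv_lhs => rw [hH.spectral_theorem, Unitary.conjStarAlgAut_apply,
    CStarRing.norm_mul_mem_unitary _ (Unitary.star_mem hC), CStarRing.norm_mem_unitary_mul _ hC,
    l2_opNorm_diagonal]

lemma singVals_nonneg (X : Matrix m n ℂ) (i : n) : 0 ≤ singVals X i := Real.sqrt_nonneg _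

lemma sq_singVals (X : Matrix m n ℂ) (i : n) :
    singVals X i ^ 2 = (isHermitian_conjTranspose_mul_self X).eigenvalues i :=
  Real.sq_sqrt ((posSemidef_conjTranspose_mul_self X).eigenvalues_nonneg i)

lemma singVals_le_opNorm (X : Matrix m n ℂ) (i : n) : singVals X i ≤ opNorm X :=
  le_ciSup (Set.finite_range _).bddAbove i

lemma opNorm_eq_l2_opNorm (X : Matrix m n ℂ) : opNorm X = ‖X‖ := by
  set hH := isHermitian_conjTranspose_mul_self X
  have hX : ‖X‖ ^ 2 = ‖(RCLike.ofReal ∘ hH.eigenvalues : n → ℂ)‖ := by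
    rw [sq, ← l2_opNorm_conjTranspose_mul_self, hH.l2_opNorm_eq_norm_eigenvalues]
  have hsq (i : n) : ‖(RCLike.ofReal ∘ hH.eigenvalues : n → ℂ) i‖ = singVals X i ^ 2 := by
    rw [sq_singVals, Function.comp_apply, RCLike.norm_ofReal,
      abs_of_nonneg ((posSemidef_conjTranspose_mul_self X).eigenvalues_nonneg i)]
  apply le_antisymm
  · refine Real.iSup_le (fun i => ?_) (norm_nonneg X)
    refine (pow_le_pow_iff_left₀ (singVals_nonneg X i) (norm_nonneg X) two_ne_zero).1 ?_
    rw [hX, ← hsq]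
    exact norm_le_pi_norm _ i
  · have hop : 0 ≤ opNorm X := Real.iSup_nonneg (singVals_nonneg X)
    refine (pow_le_pow_iff_left₀ (norm_nonneg X) hop two_ne_zero).1 ?_
    rw [hX]
    refine (pi_norm_le_iff_of_nonneg (by positivity)).2 fun i => ?_
    rw [hsq]
    exact pow_le_pow_left₀ (singVals_nonneg X i) (singVals_le_opNorm X i) 2

lemma traceNorm_nonneg (X : Matrix m n ℂ) : 0 ≤ traceNorm X :=
  Finset.sum_nonneg fun i _ => singVals_nonneg X i

lemma norm_toEuclideanLin_eigenvectorBasis (Y : Matrix m n ℂ) (i : n) :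
    ‖toEuclideanLin Y ((isHermitian_conjTranspose_mul_self Y).eigenvectorBasis i)‖
      = singVals Y i := by
  set b := (isHermitian_conjTranspose_mul_self Y).eigenvectorBasis i
  have h : (isHermitian_conjTranspose_mul_self Y).eigenvalues i = ‖toEuclideanLin Y b‖ ^ 2 := by
    rw [IsHermitian.eigenvalues_eq, ← mulVec_mulVec, dotProduct_mulVec, ← star_mulVec,
      toLpLin_apply, ← inner_self_eq_norm_sq (𝕜 := ℂ), EuclideanSpace.inner_toLp_toLp,
      dotProduct_comm]
  rw [singVals, h, Real.sqrt_sq (norm_nonneg _)]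

lemma Matrix.norm_toEuclideanLin_apply_le (X : Matrix m n ℂ) (v : EuclideanSpace ℂ n) :
    ‖toEuclideanLin X v‖ ≤ ‖X‖ * ‖v‖ :=
  ((toEuclideanLin.trans LinearMap.toContinuousLinearMap) X).le_opNorm v

lemma Matrix.trace_eq_sum_inner (M : Matrix n n ℂ) {ι : Type*} [Fintype ι]
    (b : OrthonormalBasis ι ℂ (EuclideanSpace ℂ n)) :
    M.trace = ∑ i, ⟪b i, toEuclideanLin M (b i)⟫_ℂ := by
  rw [← LinearMap.trace_eq_sum_inner, toEuclideanLin_eq_toLin_orthonormal, trace_toLin_eq]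

lemma norm_trace_mul_le (X : Matrix n m ℂ) (Y : Matrix m n ℂ) :
    ‖(X * Y).trace‖ ≤ ‖X‖ * traceNorm Y := by
  set b := (isHermitian_conjTranspose_mul_self Y).eigenvectorBasis
  rw [trace_eq_sum_inner _ b, traceNorm, Finset.mul_sum]
  refine (norm_sum_le _ _).trans (Finset.sum_le_sum fun i _ => ?_)
  have hXY : toEuclideanLin (X * Y) (b i) = toEuclideanLin X (toEuclideanLin Y (b i)) := by
    simp only [toLpLin_apply, mulVec_mulVec]
  calc ‖⟪b i, toEuclideanLin (X * Y) (b i)⟫_ℂ‖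
      ≤ ‖b i‖ * ‖toEuclideanLin X (toEuclideanLin Y (b i))‖ := hXY ▸ norm_inner_le_norm _ _
    _ ≤ ‖X‖ * singVals Y i := by
      rw [b.orthonormal.1 i, one_mul, ← norm_toEuclideanLin_eigenvectorBasis]
      exact norm_toEuclideanLin_apply_le _ _

lemma Matrix.IsHermitian.trace_cfc {H : Matrix n n ℂ} (hH : H.IsHermitian) (f : ℝ → ℝ) :
    (cfc f H).trace = ∑ i, (f (hH.eigenvalues i) : ℂ) := by
  rw [hH.cfc_eq, IsHermitian.cfc, Unitary.conjStarAlgAut_apply, trace_mul_cycle,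
    Unitary.coe_star_mul_self, one_mul, trace_diagonal]
  rfl

open scoped MatrixOrder in
lemma traceNorm_eq_trace_of_posSemidef {Y : Matrix n n ℂ} (hY : Y.PosSemidef) :
    (traceNorm Y : ℂ) = Y.trace := by
  have hsqrt : cfc Real.sqrt (Yᴴ * Y) = Y := by
    have hYY : 0 ≤ Yᴴ * Y := star_mul_self_nonneg Y
    rw [← cfcₙ_eq_cfc, ← CFC.sqrt_eq_real_sqrt _ hYY, hY.1.eq,
      CFC.sqrt_mul_self Y (nonneg_iff_posSemidef.mpr hY)]
  conv_rhs => rw [← hsqrt, (isHermitian_conjTranspose_mul_self Y).trace_cfc]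
  rw [traceNorm, Complex.ofReal_sum]
  rfl

end SingularValues

namespace Matrix

section StarAlgHom

variable (R : Type*) {n p q : Type*} [CommSemiring R] [StarRing R] [Fintype n] [DecidableEq n]
  [Fintype p] [DecidableEq p] [Fintype q] [DecidableEq q]

variable (n q) in
def kroneckerOneStarAlgHom : Matrix n n R →⋆ₐ[R] Matrix (n × q) (n × q) R where
  toFun M := M ⊗ₖ 1
  map_one' := one_kronecker_one
  map_mul' M N := by rw [← mul_kronecker_mul, one_mul]
  map_zero' := zero_kronecker _
  map_add' M N := add_kronecker M N 1
  commutes' r := by simp only [Algebra.algebraMap_eq_smul_one, smul_kronecker, one_kronecker_one]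
  map_star' M := by simp only [star_eq_conjTranspose, conjTranspose_kronecker, conjTranspose_one]

def reindexStarAlgEquiv (e : n ≃ p) : Matrix n n R ≃⋆ₐ[R] Matrix p p R :=
  StarAlgEquiv.ofAlgEquiv (reindexAlgEquiv R R e) fun M => (conjTranspose_reindex e e M).symm

end StarAlgHom

variable {n p q : Type*} [Fintype n] [DecidableEq n] [Fintype p] [DecidableEq p]
  [Fintype q] [DecidableEq q]

lemma l2_opNorm_kronecker_one_le (M : Matrix n n ℂ) : ‖M ⊗ₖ (1 : Matrix q q ℂ)‖ ≤ ‖M‖ := by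
  exact NonUnitalStarAlgHom.norm_apply_le (kroneckerOneStarAlgHom ℂ n q) M

lemma l2_opNorm_reindex (e : n ≃ p) (M : Matrix n n ℂ) : ‖reindex e e M‖ = ‖M‖ :=
  StarAlgEquiv.norm_map (reindexStarAlgEquiv ℂ e) M

lemma trace_mul_sub_trace_mul_eq {R : Type*} [CommRing R] {U V B X S : Matrix n n R}
    (hVU : V * U = 1) :
    (X * B).trace - (S * B).trace
      = (V * (U * B - B * U) * X).trace + (B * (U * X * V - S)).trace := by
  have hcomm : V * (U * B - B * U) * X = B * X - V * (B * U * X) := by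
    rw [mul_sub, sub_mul, ← mul_assoc, hVU, one_mul, mul_assoc, mul_assoc]
  have hcycle : (V * (B * U * X)).trace = (B * (U * X * V)).trace := by
    rw [trace_mul_comm]
    simp only [mul_assoc]
  rw [hcomm, mul_sub, trace_sub, trace_sub, hcycle, trace_mul_comm B X, trace_mul_comm B S]
  ring

end Matrix

lemma liftCharge_eq_sum_reindex_kronecker {d : ℕ} (A : Matrix (Fin d) (Fin d) ℂ) (n : ℕ) :
    liftCharge A n = ∑ i : Fin n, reindex (Equiv.funSplitAt i (Fin d)).symm
      (Equiv.funSplitAt i (Fin d)).symm (A ⊗ₖ (1 : Matrix ({k // k ≠ i} → Fin d) _ ℂ)) := by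
  refine Finset.sum_congr rfl fun i _ => ?_
  ext x y
  simp [one_apply, funext_iff]

lemma l2_opNorm_liftCharge_le {d : ℕ} (A : Matrix (Fin d) (Fin d) ℂ) (n : ℕ) :
    ‖liftCharge A n‖ ≤ n * ‖A‖ := by
  rw [liftCharge_eq_sum_reindex_kronecker]
  refine (norm_sum_le _ _).trans ?_
  calc ∑ i : Fin n, ‖reindex (Equiv.funSplitAt i (Fin d)).symm (Equiv.funSplitAt i (Fin d)).symm
        (A ⊗ₖ (1 : Matrix ({k // k ≠ i} → Fin d) _ ℂ))‖
      ≤ ∑ _i : Fin n, ‖A‖ := Finset.sum_le_sum fun i _ => by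
        rw [l2_opNorm_reindex]
        exact l2_opNorm_kronecker_one_le A
    _ = n * ‖A‖ := by simp

lemma norm_trace_mul_sub_trace_mul_le {ι κ : Type*} [Fintype ι] [DecidableEq ι] [Fintype κ]
    [DecidableEq κ] {ρ σ N : Matrix ι ι ℂ} {ω ω' : Matrix κ κ ℂ}
    {U : Matrix (ι × κ) (ι × κ) ℂ} (hU : U ∈ unitary (Matrix (ι × κ) (ι × κ) ℂ))
    (hρ : ρ.PosSemidef) (hρtr : ρ.trace = 1) (hω' : ω'.PosSemidef) (hω'tr : ω'.trace = 1)
    (hωtr : ω.trace = 1) :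
    ‖(ρ * N).trace - (σ * N).trace‖ ≤
      ‖N‖ * traceNorm (U * (ρ ⊗ₖ ω') * Uᴴ - σ ⊗ₖ ω) + ‖U * (N ⊗ₖ 1) - (N ⊗ₖ 1) * U‖ := by
  have htr {τ : Matrix ι ι ℂ} {ν : Matrix κ κ ℂ} (hν : ν.trace = 1) :
      ((τ ⊗ₖ ν) * (N ⊗ₖ 1)).trace = (τ * N).trace := by
    rw [← mul_kronecker_mul, trace_kronecker, mul_one, hν, mul_one]
  have hstate : traceNorm (ρ ⊗ₖ ω') = 1 := by
    have h := traceNorm_eq_trace_of_posSemidef (hρ.kronecker hω')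
    rw [trace_kronecker, hρtr, hω'tr, mul_one] at h
    exact_mod_cast h
  rw [← htr hω'tr, ← htr hωtr,
    trace_mul_sub_trace_mul_eq (V := Uᴴ) (Unitary.star_mul_self_of_mem hU)]
  refine (norm_add_le _ _).trans ?_
  rw [add_comm]
  gcongr
  · refine (norm_trace_mul_le _ _).trans ?_
    gcongr
    · exact traceNorm_nonneg _
    · exact l2_opNorm_kronecker_one_le N
  · refine (norm_trace_mul_le _ _).trans ?_
    rw [hstate, mul_one]
    exact (CStarRing.norm_mem_unitary_mul _ (Unitary.star_mem hU)).le

theorem charges_converge_of_almost_commuting_general (d c : ℕ)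
    (A : Fin c → Matrix (Fin d) (Fin d) ℂ)
    (Kdim : ℕ → ℕ)
    (ρ σ : (n : ℕ) → Matrix (Fin n → Fin d) (Fin n → Fin d) ℂ)
    (hρ : ∀ n, (ρ n).PosSemidef) (hρtr : ∀ n, (ρ n).trace = 1)
    (ω ω' : (n : ℕ) → Matrix (Fin (Kdim n)) (Fin (Kdim n)) ℂ)
    (hωtr : ∀ n, (ω n).trace = 1)
    (hω' : ∀ n, (ω' n).PosSemidef) (hω'tr : ∀ n, (ω' n).trace = 1)
    (U : (n : ℕ) →
      Matrix ((Fin n → Fin d) × Fin (Kdim n)) ((Fin n → Fin d) × Fin (Kdim n)) ℂ)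
    (hU : ∀ n, (U n)ᴴ * U n = 1 ∧ U n * (U n)ᴴ = 1)
    (herr : Tendsto
      (fun n : ℕ => traceNorm (U n * (ρ n ⊗ₖ ω' n) * (U n)ᴴ - σ n ⊗ₖ ω n))
      atTop (𝓝 0))
    (hcomm : ∀ j, Tendsto
      (fun n : ℕ => (1 / (n : ℝ)) *
        opNorm (U n * (liftCharge (A j) n ⊗ₖ (1 : Matrix (Fin (Kdim n)) (Fin (Kdim n)) ℂ))
          - (liftCharge (A j) n ⊗ₖ (1 : Matrix (Fin (Kdim n)) (Fin (Kdim n)) ℂ)) * U n))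
      atTop (𝓝 0)) :
    ∀ j, Tendsto
      (fun n : ℕ => (1 / (n : ℝ)) *
        ‖(ρ n * liftCharge (A j) n).trace - (σ n * liftCharge (A j) n).trace‖)
      atTop (𝓝 0) := by
  intro j
  have hbound := (herr.const_mul ‖A j‖).add (hcomm j)
  simp only [opNorm_eq_l2_opNorm, mul_zero, add_zero] at hbound
  refine squeeze_zero' (Eventually.of_forall fun n => by positivity) ?_ hbound
  filter_upwards [eventually_ge_atTop 1] with n hn
  have hn' : (0 : ℝ) < n := by exact_mod_cast hn
  have hgap := norm_trace_mul_sub_trace_mul_le (σ := σ n) (N := liftCharge (A j) n) (ω := ω n)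
    (hU n) (hρ n) (hρtr n) (hω' n) (hω'tr n) (hωtr n)
  calc (1 / (n : ℝ)) * ‖(ρ n * liftCharge (A j) n).trace - (σ n * liftCharge (A j) n).trace‖
      ≤ (1 / (n : ℝ)) * (n * ‖A j‖ * traceNorm (U n * (ρ n ⊗ₖ ω' n) * (U n)ᴴ - σ n ⊗ₖ ω n)
          + ‖U n * (liftCharge (A j) n ⊗ₖ 1) - (liftCharge (A j) n ⊗ₖ 1) * U n‖) := by
        gcongr
        refine hgap.trans ?_
        gcongr
        · exact traceNorm_nonneg _
        · exact l2_opNorm_liftCharge_le (A j) n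
    _ = _ := by field_simp

/-- If, for each `n`, a unitary `U n` on `H^{⊗n} ⊗ K_n` transforms `ρⁿ ⊗ ω'` into
`σⁿ ⊗ ω` up to trace-norm error vanishing in `n`, commutes asymptotically with the
total charges (`‖[U, A_j^{(n)} ⊗ 𝟙]‖_∞ = o(n)`, the ancilla carrying trivial charges),
and `dim K_n = 2^{o(n)}`, then the per-copy charge expectation values converge:
`(1/n)|Tr(ρⁿ A_j^{(n)}) − Tr(σⁿ A_j^{(n)})| → 0` for each `j`. -/
theorem charges_converge_of_almost_commuting (d c : ℕ)
    (A : Fin c → Matrix (Fin d) (Fin d) ℂ) (hA : ∀ j, (A j).IsHermitian)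
    (Kdim : ℕ → ℕ)
    (hK : Tendsto (fun n : ℕ => Real.log (Kdim n) / n) atTop (𝓝 0))
    (ρ σ : (n : ℕ) → Matrix (Fin n → Fin d) (Fin n → Fin d) ℂ)
    (hρ : ∀ n, (ρ n).PosSemidef) (hρtr : ∀ n, (ρ n).trace = 1)
    (hσ : ∀ n, (σ n).PosSemidef) (hσtr : ∀ n, (σ n).trace = 1)
    (ω ω' : (n : ℕ) → Matrix (Fin (Kdim n)) (Fin (Kdim n)) ℂ)
    (hω : ∀ n, (ω n).PosSemidef) (hωtr : ∀ n, (ω n).trace = 1)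
    (hω' : ∀ n, (ω' n).PosSemidef) (hω'tr : ∀ n, (ω' n).trace = 1)
    (U : (n : ℕ) →
      Matrix ((Fin n → Fin d) × Fin (Kdim n)) ((Fin n → Fin d) × Fin (Kdim n)) ℂ)
    (hU : ∀ n, (U n)ᴴ * U n = 1 ∧ U n * (U n)ᴴ = 1)
    (herr : Tendsto
      (fun n : ℕ => traceNorm (U n * (ρ n ⊗ₖ ω' n) * (U n)ᴴ - σ n ⊗ₖ ω n))
      atTop (𝓝 0))
    (hcomm : ∀ j, Tendsto
      (fun n : ℕ => (1 / (n : ℝ)) *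
        opNorm (U n * (liftCharge (A j) n ⊗ₖ (1 : Matrix (Fin (Kdim n)) (Fin (Kdim n)) ℂ))
          - (liftCharge (A j) n ⊗ₖ (1 : Matrix (Fin (Kdim n)) (Fin (Kdim n)) ℂ)) * U n))
      atTop (𝓝 0)) :
    ∀ j, Tendsto
      (fun n : ℕ => (1 / (n : ℝ)) *
        ‖(ρ n * liftCharge (A j) n).trace - (σ n * liftCharge (A j) n).trace‖)
      atTop (𝓝 0) :=
  charges_converge_of_almost_commuting_general d c A Kdim ρ σ hρ hρtr ω ω' hωtr hω' hω'tr U hU herr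
    hcomm
end
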